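/- Let r > 0 and let (M,d,p) be a complete pointed ℝ-tree of radius ≤ r that satisfies the branching condition for radius r. Then for every a ∈ M and every branch β at a (i.e., every connected component of M ∖ {a}), there exists a point b ∈ β with d(p,b) = r. -/

import Mathlib

open Set Metric

/-- A geodesic segment in a metric space: the image of an isometric embedding of a
closed real interval `[0, ℓ]`, going from `a` to `b`. -/
def IsGeodesicSegmentFromTo {M : Type*} [MetricSpace M] (s : Set M) (a b : M) : Prop :=
  ∃ ℓ : ℝ, 0 ≤ ℓ ∧ ∃ γ : ℝ → M,
    (∀ u ∈ Set.Icc (0:ℝ) ℓ, ∀ v ∈ Set.Icc (0:ℝ) ℓ, dist (γ u) (γ v) = |u - v|) ∧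
    γ 0 = a ∧ γ ℓ = b ∧ s = γ '' Set.Icc 0 ℓ

/-- An arc from `a` to `b`: the (injective, continuous) image of a closed real
interval `[0, ℓ]`; a single point when `a = b`. -/
def IsArcFromTo {M : Type*} [MetricSpace M] (s : Set M) (a b : M) : Prop :=
  ∃ ℓ : ℝ, 0 ≤ ℓ ∧ ∃ γ : ℝ → M,
    ContinuousOn γ (Set.Icc 0 ℓ) ∧ Set.InjOn γ (Set.Icc 0 ℓ) ∧
    γ 0 = a ∧ γ ℓ = b ∧ s = γ '' Set.Icc 0 ℓ

/-- An ℝ-tree: a metric space in which any two points are joined by a unique arc,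
and that arc is a geodesic segment. -/
def IsRTree (M : Type*) [MetricSpace M] : Prop :=
  ∀ a b : M, ∃ s : Set M,
    IsArcFromTo s a b ∧ IsGeodesicSegmentFromTo s a b ∧
    ∀ t : Set M, IsArcFromTo t a b → t = s

/-- The geodesic segment `[a, b]` in an ℝ-tree: the unique arc from `a` to `b`. -/
noncomputable def seg {M : Type*} [MetricSpace M] (h : IsRTree M) (a b : M) : Set M :=
  (h a b).choose

/-- The branches at `a`: the connected components of `M ∖ {a}`. -/
def Branches {M : Type*} [MetricSpace M] (a : M) : Set (Set M) :=
  {β : Set M | ∃ x : M, x ≠ a ∧ β = connectedComponentIn (({a} : Set M)ᶜ) x}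

/-- The branch `β` at `b` has height at least `h`:
`sup {d(b,x) : x ∈ β} ≥ h`, i.e. `β` contains points at distance arbitrarily
close to (at least) `h` from `b`. -/
def HeightGE {M : Type*} [MetricSpace M] (b : M) (β : Set M) (h : ℝ) : Prop :=
  ∀ h' : ℝ, h' < h → ∃ x ∈ β, h' < dist b x

/-- There are at least 3 branches at `b` of height ≥ `h`. -/
def ThreeBranchesGE {M : Type*} [MetricSpace M] (b : M) (h : ℝ) : Prop :=
  ∃ β₁ β₂ β₃ : Set M, β₁ ∈ Branches b ∧ β₂ ∈ Branches b ∧ β₃ ∈ Branches b ∧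
    β₁ ≠ β₂ ∧ β₁ ≠ β₃ ∧ β₂ ≠ β₃ ∧
    HeightGE b β₁ h ∧ HeightGE b β₂ h ∧ HeightGE b β₃ h

/-- A pointed ℝ-tree of radius ≤ `r` is richly branching if the set of points `b`
having at least 3 branches of height ≥ `r − d(p,b)` is dense. -/
def RichlyBranchingAt {M : Type*} [MetricSpace M] (p : M) (r : ℝ) : Prop :=
  Dense {b : M | ThreeBranchesGE b (r - dist p b)}

/-- The branching condition for radius `r`: for every `x` and every `ε > 0` there
are `y₁, y₂, y₃` with `|d(x,yᵢ) − (r − d(p,x))| ≤ ε` and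
`d(x,yᵢ) + d(x,yⱼ) − d(yᵢ,yⱼ) ≤ ε` for `i < j`. -/
def BranchingCondition {M : Type*} [MetricSpace M] (p : M) (r : ℝ) : Prop :=
  ∀ x : M, ∀ ε : ℝ, 0 < ε → ∃ y₁ y₂ y₃ : M,
    |dist x y₁ - (r - dist p x)| ≤ ε ∧
    |dist x y₂ - (r - dist p x)| ≤ ε ∧
    |dist x y₃ - (r - dist p x)| ≤ ε ∧
    dist x y₁ + dist x y₂ - dist y₁ y₂ ≤ ε ∧
    dist x y₁ + dist x y₃ - dist y₁ y₃ ≤ ε ∧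
    dist x y₂ + dist x y₃ - dist y₂ y₃ ≤ ε

/-! An ℝ-tree is 0-hyperbolic: any three segments form a tripod, so the Gromov products
at a point `z` satisfy `(x|y)_z ≥ min ((x|q)_z, (y|q)_z)`. Hence among three points `yᵢ`
with pairwise small Gromov products at `z`, as given by the branching condition, at most one
has a large Gromov product with `p` and at most one with `a`; a remaining `yᵢ` is nearly at
distance `r` from `p` and lies in the same branch at `a` as `z`. Iterating with geometrically
decreasing tolerances from a point of the branch gives a Cauchy sequence in the branch, whose
limit is at distance `r` from `p` and, staying far from `a`, still lies in the branch. -/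

open Filter Topology

def IsometricOn {M : Type*} [MetricSpace M] (γ : ℝ → M) (I : Set ℝ) : Prop :=
  ∀ u ∈ I, ∀ v ∈ I, dist (γ u) (γ v) = |u - v|

namespace IsometricOn

variable {M : Type*} [MetricSpace M] {γ : ℝ → M} {I : Set ℝ}

theorem continuousOn (h : IsometricOn γ I) : ContinuousOn γ I := by
  refine LipschitzOnWith.continuousOn (K := 1) (LipschitzOnWith.of_dist_le_mul fun u hu v hv => ?_)
  rw [h u hu v hv, NNReal.coe_one, one_mul, Real.dist_eq]

theorem injOn (h : IsometricOn γ I) : InjOn γ I := fun u hu v hv huv => by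
  have := h u hu v hv
  rwa [huv, dist_self, eq_comm, abs_eq_zero, sub_eq_zero] at this

theorem dist_eq_sub {ℓ s t : ℝ} (h : IsometricOn γ (Icc 0 ℓ)) (hs : s ∈ Icc 0 ℓ)
    (ht : t ∈ Icc 0 ℓ) (hst : s ≤ t) : dist (γ s) (γ t) = t - s := by
  rw [h s hs t ht, abs_of_nonpos (sub_nonpos.2 hst), neg_sub]

theorem isArcFromTo_image {ℓ s t : ℝ} (h : IsometricOn γ (Icc 0 ℓ)) (hs : 0 ≤ s) (hst : s ≤ t)
    (ht : t ≤ ℓ) : IsArcFromTo (γ '' Icc s t) (γ s) (γ t) := by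
  have hshift : (fun u => s + u) '' Icc 0 (t - s) = Icc s t := by
    rw [image_const_add_Icc, add_zero, add_sub_cancel]
  have hiso : IsometricOn (fun u => γ (s + u)) (Icc 0 (t - s)) := by
    intro u hu v hv
    have hsub : Icc s t ⊆ Icc 0 ℓ := Icc_subset_Icc hs ht
    rw [h _ (hsub (hshift ▸ mem_image_of_mem _ hu)) _ (hsub (hshift ▸ mem_image_of_mem _ hv)),
      add_sub_add_left_eq_sub]
  refine ⟨t - s, sub_nonneg.2 hst, fun u => γ (s + u), hiso.continuousOn, hiso.injOn,
    by simp, by simp, ?_⟩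
  rw [← hshift, image_image]

end IsometricOn

theorem IsArcFromTo.union {M : Type*} [MetricSpace M] {s t : Set M} {a b c : M}
    (hs : IsArcFromTo s a b) (ht : IsArcFromTo t b c) (hst : s ∩ t ⊆ {b}) :
    IsArcFromTo (s ∪ t) a c := by
  obtain ⟨ℓ₁, hℓ₁, γ₁, hc₁, hi₁, rfl, rfl, rfl⟩ := hs
  obtain ⟨ℓ₂, hℓ₂, γ₂, hc₂, hi₂, hb, rfl, rfl⟩ := ht
  set γ : ℝ → M := fun u => if u ≤ ℓ₁ then γ₁ u else γ₂ (u - ℓ₁)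
  have eq₁ : EqOn γ γ₁ (Icc 0 ℓ₁) := fun u hu => if_pos hu.2
  have eq₂ : EqOn γ (fun u => γ₂ (u - ℓ₁)) (Icc ℓ₁ (ℓ₁ + ℓ₂)) := fun u hu => by
    by_cases h : u ≤ ℓ₁
    · simp only [γ, le_antisymm h hu.1, sub_self, hb, ite_self]
    · exact if_neg h
  have hshift : (fun u => u - ℓ₁) '' Icc ℓ₁ (ℓ₁ + ℓ₂) = Icc 0 ℓ₂ := by simp
  have hsplit : Icc 0 (ℓ₁ + ℓ₂) = Icc 0 ℓ₁ ∪ Icc ℓ₁ (ℓ₁ + ℓ₂) :=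
    (Icc_union_Icc_eq_Icc hℓ₁ (le_add_of_nonneg_right hℓ₂)).symm
  have himage : γ '' Icc 0 (ℓ₁ + ℓ₂) = γ₁ '' Icc 0 ℓ₁ ∪ γ₂ '' Icc 0 ℓ₂ := by
    rw [hsplit, image_union, eq₁.image_eq, eq₂.image_eq, ← hshift, image_image]
  refine ⟨ℓ₁ + ℓ₂, add_nonneg hℓ₁ hℓ₂, γ, ?_, ?_, eq₁ ⟨le_rfl, hℓ₁⟩, ?_, himage.symm⟩
  · rw [hsplit]
    refine ContinuousOn.union_of_isClosed (hc₁.congr eq₁) (ContinuousOn.congr ?_ eq₂)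
      isClosed_Icc isClosed_Icc
    exact hc₂.comp (continuousOn_id.sub continuousOn_const) fun u hu =>
      hshift ▸ mem_image_of_mem _ hu
  · have cross : ∀ u ∈ Icc 0 ℓ₁, ∀ v ∈ Icc 0 (ℓ₁ + ℓ₂), ℓ₁ < v → γ u ≠ γ v := by
      intro u hu v hv hlt huv
      have hv' : v - ℓ₁ ∈ Icc 0 ℓ₂ := ⟨by linarith, by linarith [hv.2]⟩
      have hmem : γ₂ (v - ℓ₁) ∈ γ₁ '' Icc 0 ℓ₁ ∩ γ₂ '' Icc 0 ℓ₂ :=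
        ⟨⟨u, hu, by rw [← eq₁ hu, huv]; exact if_neg hlt.not_ge⟩, mem_image_of_mem _ hv'⟩
      have := hi₂ hv' ⟨le_rfl, hℓ₂⟩ ((hst hmem).trans hb.symm)
      linarith
    intro u hu v hv huv
    rcases le_or_gt u ℓ₁ with hu₁ | hu₁ <;> rcases le_or_gt v ℓ₁ with hv₁ | hv₁
    · exact hi₁ ⟨hu.1, hu₁⟩ ⟨hv.1, hv₁⟩ (by rwa [← eq₁ ⟨hu.1, hu₁⟩, ← eq₁ ⟨hv.1, hv₁⟩])
    · exact absurd huv (cross u ⟨hu.1, hu₁⟩ v hv hv₁)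
    · exact absurd huv.symm (cross v ⟨hv.1, hv₁⟩ u hu hu₁)
    · have := hi₂ ⟨sub_nonneg.2 hu₁.le, by linarith [hu.2]⟩
        ⟨sub_nonneg.2 hv₁.le, by linarith [hv.2]⟩
        (by simpa only [γ, if_neg hu₁.not_ge, if_neg hv₁.not_ge] using huv)
      linarith
  · simp [eq₂ ⟨le_add_of_nonneg_right hℓ₂, le_rfl⟩]

theorem exists_seq_of_forall_exists {α : Type*} {Q : ℕ → α → Prop} {R : ℕ → α → α → Prop}
    {x : α} (h₀ : Q 0 x) (hstep : ∀ n z, Q n z → ∃ y, Q (n + 1) y ∧ R n z y) :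
    ∃ Z : ℕ → α, (∀ n, Q n (Z n)) ∧ ∀ n, R n (Z n) (Z (n + 1)) := by
  have : Nonempty α := ⟨x⟩
  choose! f hf using hstep
  let Z : ℕ → α := fun n => Nat.rec x f n
  have hQ : ∀ n, Q n (Z n) := fun n => Nat.rec h₀ (fun n ih => (hf n _ ih).1) n
  exact ⟨Z, hQ, fun n => (hf n _ (hQ n)).2⟩

noncomputable def gromovProduct {M : Type*} [MetricSpace M] (z x y : M) : ℝ :=
  (dist z x + dist z y - dist x y) / 2

namespace IsRTree

variable {M : Type*} [MetricSpace M] (hM : IsRTree M)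
include hM

theorem exists_isometricOn_seg (x y : M) : ∃ γ : ℝ → M, IsometricOn γ (Icc 0 (dist x y)) ∧
    γ 0 = x ∧ γ (dist x y) = y ∧ seg hM x y = γ '' Icc 0 (dist x y) := by
  obtain ⟨-, ⟨ℓ, hℓ, γ, hiso, h0, hℓy, hseg⟩, -⟩ := (hM x y).choose_spec
  have hdist : dist x y = ℓ := by
    rw [← h0, ← hℓy, IsometricOn.dist_eq_sub hiso ⟨le_rfl, hℓ⟩ ⟨hℓ, le_rfl⟩ hℓ, sub_zero]
  subst hdist
  exact ⟨γ, hiso, h0, hℓy, hseg⟩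

theorem seg_eq_of_isArcFromTo {x y : M} {t : Set M} (ht : IsArcFromTo t x y) :
    t = seg hM x y :=
  (hM x y).choose_spec.2.2 t ht

theorem left_mem_seg (x y : M) : x ∈ seg hM x y := by
  obtain ⟨γ, -, h0, -, hseg⟩ := hM.exists_isometricOn_seg x y
  exact hseg ▸ ⟨0, ⟨le_rfl, dist_nonneg⟩, h0⟩

theorem right_mem_seg (x y : M) : y ∈ seg hM x y := by
  obtain ⟨γ, -, -, hy, hseg⟩ := hM.exists_isometricOn_seg x y
  exact hseg ▸ ⟨dist x y, ⟨dist_nonneg, le_rfl⟩, hy⟩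

theorem isPreconnected_seg (x y : M) : IsPreconnected (seg hM x y) := by
  obtain ⟨γ, hiso, -, -, hseg⟩ := hM.exists_isometricOn_seg x y
  exact hseg ▸ isPreconnected_Icc.image γ hiso.continuousOn

theorem isClosed_seg (x y : M) : IsClosed (seg hM x y) := by
  obtain ⟨γ, hiso, -, -, hseg⟩ := hM.exists_isometricOn_seg x y
  exact hseg ▸ (isCompact_Icc.image_of_continuousOn hiso.continuousOn).isClosed

theorem dist_of_mem_seg {x y u v : M} (hu : u ∈ seg hM x y) (hv : v ∈ seg hM x y) :
    dist u v = |dist x u - dist x v| := by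
  obtain ⟨γ, hiso, h0, -, hseg⟩ := hM.exists_isometricOn_seg x y
  rw [hseg] at hu hv
  obtain ⟨s, hs, rfl⟩ := hu
  obtain ⟨t, ht, rfl⟩ := hv
  have h0I : (0 : ℝ) ∈ Icc 0 (dist x y) := ⟨le_rfl, dist_nonneg⟩
  rw [← h0, hiso.dist_eq_sub h0I hs hs.1, hiso.dist_eq_sub h0I ht ht.1, sub_zero, sub_zero,
    hiso s hs t ht]

theorem dist_add_dist_of_mem_seg {x y u : M} (hu : u ∈ seg hM x y) :
    dist x u + dist u y = dist x y := by
  obtain ⟨γ, hiso, h0, hy, hseg⟩ := hM.exists_isometricOn_seg x y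
  rw [hseg] at hu
  obtain ⟨s, hs, rfl⟩ := hu
  have hxs := hiso.dist_eq_sub ⟨le_rfl, dist_nonneg⟩ hs hs.1
  have hsy := hiso.dist_eq_sub hs ⟨dist_nonneg, le_rfl⟩ hs.2
  rw [h0] at hxs
  rw [hy] at hsy
  linarith

theorem seg_inter_seg_inter_seg_nonempty (x y z : M) :
    (seg hM x y ∩ seg hM y z ∩ seg hM x z).Nonempty := by
  obtain ⟨γ, hγ, hγ0, hγy, hsegxy⟩ := hM.exists_isometricOn_seg x y
  obtain ⟨σ, hσ, -, hσz, hsegyz⟩ := hM.exists_isometricOn_seg y z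
  -- `γ (sInf T)` is the first point of `[x, y]` on `[y, z]`, so the arcs `[x, γ (sInf T)]`
  -- and `[γ (sInf T), z] ⊆ [y, z]` meet only there and together form `[x, z]`
  set T := Icc 0 (dist x y) ∩ γ ⁻¹' seg hM y z
  have hyT : dist x y ∈ T :=
    ⟨⟨dist_nonneg, le_rfl⟩, by rw [mem_preimage, hγy]; exact hM.left_mem_seg y z⟩
  have hTbdd : BddBelow T := ⟨0, fun t ht => ht.1.1⟩
  have ht₀ : sInf T ∈ T :=
    (hγ.continuousOn.preimage_isClosed_of_isClosed isClosed_Icc (hM.isClosed_seg y z)).csInf_mem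
      ⟨_, hyT⟩ hTbdd
  obtain ⟨s₀, hs₀, hσs₀⟩ := hsegyz ▸ ht₀.2
  have hA := hγ.isArcFromTo_image le_rfl ht₀.1.1 ht₀.1.2
  have hB := hσ.isArcFromTo_image hs₀.1 hs₀.2 le_rfl
  rw [hγ0, ← hσs₀] at hA
  rw [hσz] at hB
  have hAB : γ '' Icc 0 (sInf T) ∩ σ '' Icc s₀ (dist y z) ⊆ {γ (sInf T)} := by
    rintro _ ⟨⟨t, ht, rfl⟩, hσt⟩
    have htT : t ∈ T := ⟨⟨ht.1, ht.2.trans ht₀.1.2⟩,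
      hsegyz ▸ image_mono (Icc_subset_Icc hs₀.1 le_rfl) hσt⟩
    rw [le_antisymm ht.2 (csInf_le hTbdd htT)]
    exact mem_singleton _
  rw [← hσs₀] at hAB
  refine ⟨σ s₀, ⟨hsegxy ▸ hσs₀ ▸ mem_image_of_mem _ ht₀.1, hsegyz ▸ mem_image_of_mem _ hs₀⟩, ?_⟩
  rw [← hM.seg_eq_of_isArcFromTo (hA.union hB hAB)]
  exact Or.inl ⟨sInf T, ⟨ht₀.1.1, le_rfl⟩, hσs₀.symm⟩

theorem min_gromovProduct_le (z x y q : M) :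
    min (gromovProduct z x q) (gromovProduct z y q) ≤ gromovProduct z x y := by
  obtain ⟨m₁, ⟨hxz, hzq₁⟩, hxq⟩ := hM.seg_inter_seg_inter_seg_nonempty x z q
  obtain ⟨m₂, ⟨hyz, hzq₂⟩, hyq⟩ := hM.seg_inter_seg_inter_seg_nonempty y z q
  have hxm₁ := hM.dist_add_dist_of_mem_seg hxz
  have hym₂ := hM.dist_add_dist_of_mem_seg hyz
  have hm₁ : gromovProduct z x q = dist z m₁ := by
    unfold gromovProduct
    linarith [hM.dist_add_dist_of_mem_seg hzq₁, hM.dist_add_dist_of_mem_seg hxq, dist_comm z x,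
      dist_comm z m₁]
  have hm₂ : gromovProduct z y q = dist z m₂ := by
    unfold gromovProduct
    linarith [hM.dist_add_dist_of_mem_seg hzq₂, hM.dist_add_dist_of_mem_seg hyq, dist_comm z y,
      dist_comm z m₂]
  have hm₁₂ := hM.dist_of_mem_seg hzq₁ hzq₂
  have htri : dist x y ≤ dist x m₁ + dist m₁ m₂ + dist m₂ y :=
    (dist_triangle x m₂ y).trans (add_le_add_left (dist_triangle x m₁ m₂) _)
  rw [hm₁, hm₂]
  unfold gromovProduct
  rcases le_total (dist z m₁) (dist z m₂) with h | h
  · rw [abs_of_nonpos (sub_nonpos.2 h)] at hm₁₂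
    refine (min_le_left _ _).trans ?_
    linarith [dist_comm z x, dist_comm z y, dist_comm z m₁, dist_comm z m₂, dist_comm m₂ y]
  · rw [abs_of_nonneg (sub_nonneg.2 h)] at hm₁₂
    refine (min_le_right _ _).trans ?_
    linarith [dist_comm z x, dist_comm z y, dist_comm z m₁, dist_comm z m₂, dist_comm m₂ y]

theorem gromovProduct_le_or_le {z x y : M} {c : ℝ} (hxy : gromovProduct z x y ≤ c) (q : M) :
    gromovProduct z x q ≤ c ∨ gromovProduct z y q ≤ c := by
  by_contra! h
  exact (lt_min h.1 h.2).not_ge ((hM.min_gromovProduct_le z x y q).trans hxy)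

theorem mem_connectedComponentIn_of_notMem_seg {u v a : M} (h : a ∉ seg hM u v) :
    v ∈ connectedComponentIn {a}ᶜ u :=
  (hM.isPreconnected_seg u v).subset_connectedComponentIn (hM.left_mem_seg u v)
    (fun _ hw (hwa : _ = a) => h (hwa ▸ hw)) (hM.right_mem_seg u v)

theorem mem_connectedComponentIn_of_dist_lt {u v a : M} (h : dist u v < dist u a) :
    v ∈ connectedComponentIn {a}ᶜ u :=
  hM.mem_connectedComponentIn_of_notMem_seg fun ha => by
    linarith [hM.dist_add_dist_of_mem_seg ha, dist_nonneg (x := a) (y := v)]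

theorem exists_near_sphere_mem_connectedComponentIn {p a z : M} {r ε : ℝ}
    (hbc : BranchingCondition p r) (hε : 0 < ε) (hεa : ε < dist z a) :
    ∃ y ∈ connectedComponentIn {a}ᶜ z, dist z y ≤ r - dist p z + ε ∧
      r - 2 * ε ≤ dist p y ∧ dist z a - ε ≤ dist y a := by
  obtain ⟨y₁, y₂, y₃, h₁, h₂, h₃, h₁₂, h₁₃, h₂₃⟩ := hbc z ε hε
  have hsmall : ∀ {u v : M}, dist z u + dist z v - dist u v ≤ ε → ∀ q,
      gromovProduct z u q ≤ ε / 2 ∨ gromovProduct z v q ≤ ε / 2 := fun huv =>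
    hM.gromovProduct_le_or_le (by unfold gromovProduct; linarith)
  suffices key : ∀ y, |dist z y - (r - dist p z)| ≤ ε → gromovProduct z y p ≤ ε / 2 →
      gromovProduct z y a ≤ ε / 2 → ∃ y ∈ connectedComponentIn {a}ᶜ z,
        dist z y ≤ r - dist p z + ε ∧ r - 2 * ε ≤ dist p y ∧ dist z a - ε ≤ dist y a by
    -- neither `p` nor `a` can have a large Gromov product with two of the `yᵢ`
    have := hsmall h₁₂ p; have := hsmall h₁₃ p; have := hsmall h₂₃ p
    have := hsmall h₁₂ a; have := hsmall h₁₃ a; have := hsmall h₂₃ a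
    have : (gromovProduct z y₁ p ≤ ε / 2 ∧ gromovProduct z y₁ a ≤ ε / 2) ∨
        (gromovProduct z y₂ p ≤ ε / 2 ∧ gromovProduct z y₂ a ≤ ε / 2) ∨
        (gromovProduct z y₃ p ≤ ε / 2 ∧ gromovProduct z y₃ a ≤ ε / 2) := by tauto
    rcases this with ⟨hp, ha⟩ | ⟨hp, ha⟩ | ⟨hp, ha⟩
    exacts [key y₁ h₁ hp ha, key y₂ h₂ hp ha, key y₃ h₃ hp ha]
  intro y hy hp ha
  unfold gromovProduct at hp ha
  rw [abs_le] at hy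
  refine ⟨y, hM.mem_connectedComponentIn_of_notMem_seg fun has => ?_, by linarith,
    by linarith [dist_comm z p, dist_comm y p], by linarith [dist_nonneg (x := z) (y := y)]⟩
  linarith [hM.dist_add_dist_of_mem_seg has, dist_comm a y]

theorem exists_seq_in_branch {p a x : M} {r : ℝ} (hbc : BranchingCondition p r) (hxa : x ≠ a) :
    ∃ W : ℕ → M, (∀ n, W n ∈ connectedComponentIn {a}ᶜ x) ∧
      (∀ n, dist x a / 2 ≤ dist (W n) a) ∧ (∀ n, r - dist x a / 2 / 2 ^ n ≤ dist p (W n)) ∧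
      ∀ n, dist (W n) (W (n + 1)) ≤ r - dist p (W n) + dist x a / 8 / 2 ^ n := by
  set δ := dist x a
  have hδ : 0 < δ := dist_pos.2 hxa
  set ε : ℕ → ℝ := fun n => δ / 4 / 2 ^ n with hε
  have hεpos : ∀ n, 0 < ε n := fun n => by positivity
  have hεsucc : ∀ n, ε (n + 1) = ε n / 2 := fun n => by simp only [hε]; ring
  -- a step loses at most `ε n = 2 * ε (n + 1)` of the distance to `a`
  obtain ⟨Z, hQ, hR⟩ := exists_seq_of_forall_exists (x := x)
    (Q := fun n z => z ∈ connectedComponentIn {a}ᶜ x ∧ δ / 2 + 2 * ε n ≤ dist z a)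
    (R := fun n z y => dist z y ≤ r - dist p z + ε n ∧ r - 2 * ε n ≤ dist p y)
    ⟨mem_connectedComponentIn hxa, (by simp only [hε]; ring : δ / 2 + 2 * ε 0 = δ).le⟩
    fun n z ⟨hzC, hza⟩ => by
      obtain ⟨y, hyC, hzy, hpy, hya⟩ :=
        hM.exists_near_sphere_mem_connectedComponentIn (a := a) (z := z) hbc (hεpos n)
          (by linarith [hεpos n])
      refine ⟨y, ⟨connectedComponentIn_eq hzC ▸ hyC, ?_⟩, hzy, hpy⟩
      linarith [hεsucc n]
  refine ⟨fun n => Z (n + 1), fun n => (hQ (n + 1)).1, fun n => ?_, fun n => ?_, fun n => ?_⟩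
  · linarith [(hQ (n + 1)).2, hεpos (n + 1)]
  · linarith [(hR n).2, show δ / 2 / 2 ^ n = 2 * ε n by simp only [hε]; ring]
  · linarith [(hR (n + 1)).1, show ε (n + 1) = δ / 8 / 2 ^ n by simp only [hε]; ring]

end IsRTree

theorem statement_9_general {M : Type*} [MetricSpace M] [CompleteSpace M]
    (r : ℝ) (hM : IsRTree M) (p : M)
    (hrad : ∀ x : M, dist p x ≤ r) (hbc : BranchingCondition p r)
    (a : M) (β : Set M) (hβ : β ∈ Branches a) :
    ∃ b ∈ β, dist p b = r := by
  obtain ⟨x, hxa, rfl⟩ := hβ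
  obtain ⟨W, hWC, hWa, hWp, hWstep⟩ := hM.exists_seq_in_branch hbc hxa
  have hW : CauchySeq W := cauchySeq_of_le_geometric_two (C := 5 * dist x a / 4) fun n => by
    linarith [hWstep n, hWp n,
      show 5 * dist x a / 4 / 2 / 2 ^ n = dist x a / 2 / 2 ^ n + dist x a / 8 / 2 ^ n by ring]
  obtain ⟨b, hb⟩ := cauchySeq_tendsto_of_complete hW
  refine ⟨b, ?_, ?_⟩
  · obtain ⟨N, hN⟩ := Metric.tendsto_atTop.1 hb (dist x a / 2) (half_pos (dist_pos.2 hxa))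
    rw [connectedComponentIn_eq (hWC N)]
    exact hM.mem_connectedComponentIn_of_dist_lt ((hN N le_rfl).trans_le (hWa N))
  · have hlim : Tendsto (fun n : ℕ => r - dist x a / 2 / 2 ^ n) atTop (𝓝 r) := by
      simpa [div_eq_mul_inv] using tendsto_const_nhds.sub
        ((tendsto_pow_atTop_nhds_zero_of_lt_one (by norm_num) one_half_lt_one).const_mul
          (dist x a / 2))
    exact tendsto_nhds_unique (tendsto_const_nhds.dist hb)
      (tendsto_of_tendsto_of_tendsto_of_le_of_le hlim tendsto_const_nhds hWp fun n => hrad _)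

/-- In a complete pointed ℝ-tree of radius ≤ `r` satisfying the
branching condition, every branch at every point contains a point at distance
exactly `r` from the basepoint. -/
theorem statement_9 {M : Type*} [MetricSpace M] [CompleteSpace M]
    (r : ℝ) (hr : 0 < r) (hM : IsRTree M) (p : M)
    (hrad : ∀ x : M, dist p x ≤ r) (hbc : BranchingCondition p r)
    (a : M) (β : Set M) (hβ : β ∈ Branches a) :
    ∃ b ∈ β, dist p b = r :=
  statement_9_general r hM p hrad hbc a β hβ
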